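/- There exists a constant C > 0 such that for every e ∈ ℝ, every p ∈ [0,2], every b_1 > 0 and every ℓ ∈ {2,3}, |∫ K_1^{(ℓ)}((ε̃ − e)/b_1) ε̃^p f(ε̃) dε̃| ≤ C b_1^3 (Lemma 4, second- and third-derivative bounds). -/

import Mathlib

/-!
After the substitution `u = e + b v` the integral is `b ∫ K⁽ˡ⁾(v) h_p(e + b v) dv`. Since `K⁽ˡ⁾`
has vanishing zeroth and first moments, `h_p(e + b v)` may be replaced by its first-order Taylor
remainder at `e`, which is at most `M b² v²` as soon as `|h_p''| ≤ M` uniformly in `p ∈ [0, 2]`.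

The uniformity in `p` is the real content. For `|u| ≥ 1` it follows from the bounds on `f`, `h_1'`
and `h_2''`. Near `0` it needs `f(u) = O(u²)`: indeed `f(0) = 0`, because
`u^{3/2} h_{1/2}''(u) = -f(u)/4 + O(u)` stays bounded, and then `f'(0) = 0` because `0` is a minimum
of the density `f`. The same estimates make `h_p` twice differentiable at `0`.
-/

open MeasureTheory Real Filter Topology Set

theorem abs_sub_le_of_hasDerivAt {g g' : ℝ → ℝ} {M : ℝ} (hg : ∀ x, HasDerivAt g (g' x) x)
    (hg' : ∀ x, |g' x| ≤ M) (a b : ℝ) : |g b - g a| ≤ M * |b - a| :=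
  convex_univ.norm_image_sub_le_of_norm_hasDerivWithin_le (fun x _ => (hg x).hasDerivWithinAt)
    (fun x _ => hg' x) (mem_univ a) (mem_univ b)

theorem abs_taylor_two_le {g g₁ g₂ : ℝ → ℝ} {M : ℝ} (hg : ∀ x, HasDerivAt g (g₁ x) x)
    (hg₁ : ∀ x, HasDerivAt g₁ (g₂ x) x) (hg₂ : ∀ x, |g₂ x| ≤ M) (e t : ℝ) :
    |g (e + t) - g e - t * g₁ e| ≤ M * t ^ 2 := by
  have hM : 0 ≤ M := (abs_nonneg _).trans (hg₂ 0)
  have hderiv : ∀ s, HasDerivAt (fun s => g (e + s) - s * g₁ e) (g₁ (e + s) - g₁ e) s :=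
    fun s => ((hg (e + s)).comp_const_add.sub ((hasDerivAt_id' s).mul_const (g₁ e))).congr_deriv
      (by ring)
  have hbound : ∀ s ∈ uIcc 0 t, ‖g₁ (e + s) - g₁ e‖ ≤ M * |t| := fun s hs =>
    calc |g₁ (e + s) - g₁ e| ≤ M * |e + s - e| := abs_sub_le_of_hasDerivAt hg₁ hg₂ e (e + s)
      _ ≤ M * |t| :=
        mul_le_mul_of_nonneg_left (by simpa using abs_sub_left_of_mem_uIcc hs) hM
  have key := (convex_uIcc 0 t).norm_image_sub_le_of_norm_hasDerivWithin_le
    (fun s _ => (hderiv s).hasDerivWithinAt) hbound left_mem_uIcc right_mem_uIcc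
  calc |g (e + t) - g e - t * g₁ e| = |(g (e + t) - t * g₁ e) - (g (e + 0) - 0 * g₁ e)| := by
        congr 1; simp only [add_zero, zero_mul, sub_zero]; ring
    _ ≤ M * |t| * |t - 0| := key
    _ = M * t ^ 2 := by rw [sub_zero, mul_assoc, abs_mul_abs_self, sq]

theorem continuousAt_zero_of_abs_le_mul_rpow {g : ℝ → ℝ} {c q : ℝ} (hq : 0 < q)
    (hg : ∀ u, |g u| ≤ c * |u| ^ q) : ContinuousAt g 0 := by
  have hg0 : g 0 = 0 := abs_nonpos_iff.mp (by simpa [zero_rpow hq.ne'] using hg 0)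
  have hlim : Tendsto (fun u : ℝ => c * |u| ^ q) (𝓝 0) (𝓝 0) := by
    simpa [zero_rpow hq.ne'] using
      ((continuous_abs.rpow_const fun _ => Or.inr hq.le).const_mul c).tendsto 0
  rw [ContinuousAt, hg0]
  exact squeeze_zero_norm hg hlim

theorem abs_rpow_mul_le {g : ℝ → ℝ} {A k : ℝ} (hk : 0 < k) (hg : ∀ u, |g u| ≤ A * |u| ^ k)
    (r u : ℝ) : |u ^ r * g u| ≤ A * |u| ^ (r + k) := by
  rcases eq_or_ne u 0 with rfl | hu
  · have hA : 0 ≤ A := by simpa using (abs_nonneg _).trans (hg 1)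
    have hg0 : g 0 = 0 := abs_nonpos_iff.mp (by simpa [zero_rpow hk.ne'] using hg 0)
    simp only [hg0, mul_zero, abs_zero]
    positivity
  · calc |u ^ r * g u| ≤ |u| ^ r * (A * |u| ^ k) := by
          rw [abs_mul]; gcongr
          · exact abs_rpow_le_abs_rpow u r
          · exact hg u
      _ = A * |u| ^ (r + k) := by rw [rpow_add (abs_pos.mpr hu)]; ring

-- The formal first and second derivatives of `u ↦ u ^ p * f u`; the true ones at `u ≠ 0`.
noncomputable def rpowMulDeriv (f : ℝ → ℝ) (p u : ℝ) : ℝ :=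
  p * u ^ (p - 1) * f u + u ^ p * deriv f u

noncomputable def rpowMulDeriv2 (f : ℝ → ℝ) (p u : ℝ) : ℝ :=
  p * (p - 1) * u ^ (p - 2) * f u + 2 * p * u ^ (p - 1) * deriv f u + u ^ p * deriv (deriv f) u

section RpowMul

variable {f : ℝ → ℝ} {p u A : ℝ}

theorem hasDerivAt_rpow_mul (hf : DifferentiableAt ℝ f u) (hu : u ≠ 0) :
    HasDerivAt (fun u => u ^ p * f u) (rpowMulDeriv f p u) u :=
  (hasDerivAt_rpow_const (Or.inl hu)).mul hf.hasDerivAt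

theorem hasDerivAt_rpowMulDeriv (hf : ContDiff ℝ 2 f) (hu : u ≠ 0) :
    HasDerivAt (rpowMulDeriv f p) (rpowMulDeriv2 f p u) u := by
  have h₁ := ((hasDerivAt_rpow_const (p := p - 1) (Or.inl hu)).const_mul p).mul
    (hf.differentiable two_ne_zero u).hasDerivAt
  have h₂ := (hasDerivAt_rpow_const (p := p) (Or.inl hu)).mul
    (hf.differentiable_deriv_two u).hasDerivAt
  refine (h₁.add h₂).congr_deriv ?_
  rw [rpowMulDeriv2, show p - 1 - 1 = p - 2 by ring]
  ring

theorem iteratedDeriv_two_rpow_mul (hf : ContDiff ℝ 2 f) (hu : u ≠ 0) :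
    iteratedDeriv 2 (fun u => u ^ p * f u) u = rpowMulDeriv2 f p u := by
  have hderiv : deriv (fun u => u ^ p * f u) =ᶠ[𝓝 u] rpowMulDeriv f p := by
    filter_upwards [isOpen_ne.mem_nhds hu] with x hx
    exact (hasDerivAt_rpow_mul (hf.differentiable two_ne_zero x) hx).deriv
  rw [iteratedDeriv_succ, iteratedDeriv_one, hderiv.deriv_eq,
    (hasDerivAt_rpowMulDeriv hf hu).deriv]

theorem apply_zero_eq_zero_of_abs_iteratedDeriv_two_sqrt_mul_le (hf : ContDiff ℝ 2 f) {C : ℝ}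
    (hC : ∀ u, |iteratedDeriv 2 (fun u => u ^ (1 / 2 : ℝ) * f u) u| ≤ C) : f 0 = 0 := by
  set ρ : ℝ → ℝ := fun u =>
    4 * (|u * deriv f u| + |u ^ 2 * deriv (deriv f) u| + u ^ (3 / 2 : ℝ) * C)
  have hbound : ∀ u > 0, |f u| ≤ ρ u := by
    intro u hu
    -- `u ^ (3/2) h_{1/2}''(u) = -f u / 4 + u f'(u) + u² f''(u)`
    have hdecomp : f u = 4 * (u * deriv f u + u ^ 2 * deriv (deriv f) u
        - u ^ (3 / 2 : ℝ) * iteratedDeriv 2 (fun u => u ^ (1 / 2 : ℝ) * f u) u) := by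
      rw [iteratedDeriv_two_rpow_mul hf hu.ne', rpowMulDeriv2]
      have e₁ : u ^ (3 / 2 : ℝ) * u ^ (1 / 2 - 2 : ℝ) = 1 := by rw [← rpow_add hu]; norm_num
      have e₂ : u ^ (3 / 2 : ℝ) * u ^ (1 / 2 - 1 : ℝ) = u := by rw [← rpow_add hu]; norm_num
      have e₃ : u ^ (3 / 2 : ℝ) * u ^ (1 / 2 : ℝ) = u ^ 2 := by rw [← rpow_add hu]; norm_num
      linear_combination (-(f u)) * e₁ + (4 * deriv f u) * e₂ + (4 * deriv (deriv f) u) * e₃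
    have hrem : |u ^ (3 / 2 : ℝ) * iteratedDeriv 2 (fun u => u ^ (1 / 2 : ℝ) * f u) u|
        ≤ u ^ (3 / 2 : ℝ) * C := by
      rw [abs_mul, abs_of_nonneg (rpow_nonneg hu.le _)]
      exact mul_le_mul_of_nonneg_left (hC u) (rpow_nonneg hu.le _)
    rw [hdecomp, abs_mul, abs_of_pos four_pos]
    have := abs_sub (u * deriv f u + u ^ 2 * deriv (deriv f) u)
      (u ^ (3 / 2 : ℝ) * iteratedDeriv 2 (fun u => u ^ (1 / 2 : ℝ) * f u) u)
    have := abs_add_le (u * deriv f u) (u ^ 2 * deriv (deriv f) u)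
    simp only [ρ]
    linarith
  have hρ : Continuous ρ := by
    have := (hf.continuous_deriv (by norm_num))
    have := hf.deriv'.continuous_deriv_one
    simp only [ρ]
    fun_prop (disch := norm_num)
  have hlim : Tendsto ρ (𝓝[>] 0) (𝓝 0) := by
    simpa [ρ] using (hρ.tendsto 0).mono_left nhdsWithin_le_nhds
  have hf0 : |f 0| ≤ 0 :=
    le_of_tendsto_of_tendsto (((continuous_abs.comp hf.continuous).tendsto 0).mono_left
      nhdsWithin_le_nhds) hlim (eventually_nhdsWithin_of_forall hbound)
  exact abs_nonpos_iff.mp hf0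

theorem abs_le_mul_rpow_two_of_apply_zero_of_deriv_zero (hf : ContDiff ℝ 2 f)
    (hf₂ : ∀ u, |deriv (deriv f) u| ≤ A) (hf0 : f 0 = 0) (hf'0 : deriv f 0 = 0) (u : ℝ) :
    |f u| ≤ A * |u| ^ (2 : ℝ) := by
  simpa [hf0, hf'0, rpow_two, sq_abs] using
    abs_taylor_two_le (fun x => (hf.differentiable two_ne_zero x).hasDerivAt)
      (fun x => (hf.differentiable_deriv_two x).hasDerivAt) hf₂ 0 u

theorem abs_deriv_le_mul_abs_of_deriv_zero (hf : ContDiff ℝ 2 f)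
    (hf₂ : ∀ u, |deriv (deriv f) u| ≤ A) (hf'0 : deriv f 0 = 0) (u : ℝ) :
    |deriv f u| ≤ A * |u| ^ (1 : ℝ) := by
  simpa [hf'0] using
    abs_sub_le_of_hasDerivAt (fun x => (hf.differentiable_deriv_two x).hasDerivAt) hf₂ 0 u

theorem abs_rpowMulDeriv_le (hf₀ : ∀ u, |f u| ≤ A * |u| ^ (2 : ℝ))
    (hf₁ : ∀ u, |deriv f u| ≤ A * |u| ^ (1 : ℝ)) (hp : p ∈ Icc (0 : ℝ) 2) (u : ℝ) :
    |rpowMulDeriv f p u| ≤ 3 * A * |u| ^ (p + 1) := by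
  have t₁ := abs_rpow_mul_le two_pos hf₀ (p - 1) u
  have t₂ := abs_rpow_mul_le one_pos hf₁ p u
  rw [show p - 1 + 2 = p + 1 by ring] at t₁
  have hp' : |p| ≤ 2 := abs_le.mpr ⟨by linarith [hp.1], hp.2⟩
  calc |rpowMulDeriv f p u| ≤ |p| * |u ^ (p - 1) * f u| + |u ^ p * deriv f u| := by
        rw [rpowMulDeriv, mul_assoc, ← abs_mul]; exact abs_add_le _ _
    _ ≤ 2 * (A * |u| ^ (p + 1)) + A * |u| ^ (p + 1) := by gcongr
    _ = 3 * A * |u| ^ (p + 1) := by ring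

theorem abs_rpowMulDeriv2_le (hf₀ : ∀ u, |f u| ≤ A * |u| ^ (2 : ℝ))
    (hf₁ : ∀ u, |deriv f u| ≤ A * |u| ^ (1 : ℝ)) (hf₂ : ∀ u, |deriv (deriv f) u| ≤ A)
    (hp : p ∈ Icc (0 : ℝ) 2) (u : ℝ) : |rpowMulDeriv2 f p u| ≤ 7 * A * |u| ^ p := by
  have t₁ := abs_rpow_mul_le two_pos hf₀ (p - 2) u
  have t₂ := abs_rpow_mul_le one_pos hf₁ (p - 1) u
  have t₃ : |u ^ p * deriv (deriv f) u| ≤ |u| ^ p * A := by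
    rw [abs_mul]; gcongr
    · exact abs_rpow_le_abs_rpow u p
    · exact hf₂ u
  rw [show p - 2 + 2 = p by ring] at t₁
  rw [show p - 1 + 1 = p by ring] at t₂
  have hp₁ : |p * (p - 1)| ≤ 2 := by
    rw [abs_le]; constructor <;> nlinarith [hp.1, hp.2]
  have hp₂ : |2 * p| ≤ 4 := by
    rw [abs_le]; constructor <;> linarith [hp.1, hp.2]
  calc |rpowMulDeriv2 f p u| ≤ |p * (p - 1)| * |u ^ (p - 2) * f u|
        + |2 * p| * |u ^ (p - 1) * deriv f u| + |u ^ p * deriv (deriv f) u| := by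
        rw [rpowMulDeriv2, mul_assoc (p * (p - 1)), mul_assoc (2 * p), ← abs_mul, ← abs_mul]
        exact (abs_add_le _ _).trans (add_le_add_left (abs_add_le _ _) _)
    _ ≤ 2 * (A * |u| ^ p) + 4 * (A * |u| ^ p) + |u| ^ p * A := by gcongr
    _ = 7 * A * |u| ^ p := by ring

theorem hasDerivAt_rpow_mul_of_abs_le (hf : ContDiff ℝ 2 f)
    (hf₀ : ∀ u, |f u| ≤ A * |u| ^ (2 : ℝ)) (hf₁ : ∀ u, |deriv f u| ≤ A * |u| ^ (1 : ℝ))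
    (hp : p ∈ Icc (0 : ℝ) 2) (u : ℝ) :
    HasDerivAt (fun u => u ^ p * f u) (rpowMulDeriv f p u) u :=
  hasDerivAt_of_hasDerivAt_of_ne'
    (fun y hy => hasDerivAt_rpow_mul (hf.differentiable two_ne_zero y) hy)
    ((continuous_rpow_const hp.1).mul hf.continuous).continuousAt
    (continuousAt_zero_of_abs_le_mul_rpow (by linarith [hp.1])
      (abs_rpowMulDeriv_le hf₀ hf₁ hp)) u

theorem hasDerivAt_rpowMulDeriv_of_abs_le (hf : ContDiff ℝ 2 f)
    (hf₀ : ∀ u, |f u| ≤ A * |u| ^ (2 : ℝ)) (hf₁ : ∀ u, |deriv f u| ≤ A * |u| ^ (1 : ℝ))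
    (hf₂ : ∀ u, |deriv (deriv f) u| ≤ A) (hp : p ∈ Icc (0 : ℝ) 2) (u : ℝ) :
    HasDerivAt (rpowMulDeriv f p) (rpowMulDeriv2 f p u) u := by
  have hcont : ContinuousAt (rpowMulDeriv2 f p) 0 := by
    rcases hp.1.eq_or_lt with rfl | hp₀
    · have : rpowMulDeriv2 f 0 = deriv (deriv f) := by funext u; simp [rpowMulDeriv2]
      rw [this]
      exact hf.deriv'.continuous_deriv_one.continuousAt
    · exact continuousAt_zero_of_abs_le_mul_rpow hp₀ (abs_rpowMulDeriv2_le hf₀ hf₁ hf₂ hp)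
  exact hasDerivAt_of_hasDerivAt_of_ne' (fun y hy => hasDerivAt_rpowMulDeriv hf hy)
    (continuousAt_zero_of_abs_le_mul_rpow (by linarith [hp.1])
      (abs_rpowMulDeriv_le hf₀ hf₁ hp)) hcont u
theorem abs_rpowMulDeriv2_le_of_one_le_abs {A₀ B₁ B₂ : ℝ} (hp : p ∈ Icc (0 : ℝ) 2)
    (hu : 1 ≤ |u|) (hf₀ : |f u| ≤ A₀) (hf₁ : |u * deriv f u| ≤ B₁)
    (hf₂ : |u ^ 2 * deriv (deriv f) u| ≤ B₂) :
    |rpowMulDeriv2 f p u| ≤ 2 * A₀ + 4 * B₁ + B₂ := by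
  have t₁ : |p * (p - 1) * u ^ (p - 2) * f u| ≤ 2 * A₀ := by
    have hp₁ : |p * (p - 1)| ≤ 2 := by
      rw [abs_le]; constructor <;> nlinarith [hp.1, hp.2]
    have hpow : |u ^ (p - 2)| ≤ 1 :=
      (abs_rpow_le_abs_rpow u _).trans (rpow_le_one_of_one_le_of_nonpos hu (by linarith [hp.2]))
    rw [abs_mul, abs_mul]
    calc |p * (p - 1)| * |u ^ (p - 2)| * |f u| ≤ 2 * 1 * A₀ := by gcongr
      _ = 2 * A₀ := by ring
  have t₂ : |2 * p * u ^ (p - 1) * deriv f u| ≤ 4 * B₁ := by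
    have hp₂ : |2 * p| ≤ 4 := by
      rw [abs_le]; constructor <;> linarith [hp.1, hp.2]
    have hpow : |u ^ (p - 1)| ≤ |u| :=
      (abs_rpow_le_abs_rpow u _).trans
        ((rpow_le_rpow_of_exponent_le hu (by linarith [hp.2])).trans_eq (rpow_one _))
    calc |2 * p * u ^ (p - 1) * deriv f u| = |2 * p| * (|u ^ (p - 1)| * |deriv f u|) := by
          rw [abs_mul, abs_mul, mul_assoc]
      _ ≤ 4 * (|u| * |deriv f u|) := by gcongr
      _ ≤ 4 * B₁ := by rw [← abs_mul]; gcongr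
  have t₃ : |u ^ p * deriv (deriv f) u| ≤ B₂ := by
    have hpow : |u ^ p| ≤ |u ^ 2| :=
      (abs_rpow_le_abs_rpow u _).trans
        ((rpow_le_rpow_of_exponent_le hu hp.2).trans_eq (by rw [rpow_two, abs_pow]))
    calc |u ^ p * deriv (deriv f) u| ≤ |u ^ 2 * deriv (deriv f) u| := by
          rw [abs_mul, abs_mul]; gcongr
      _ ≤ B₂ := hf₂
  rw [rpowMulDeriv2]
  linarith [abs_add_le (p * (p - 1) * u ^ (p - 2) * f u + 2 * p * u ^ (p - 1) * deriv f u)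
    (u ^ p * deriv (deriv f) u), abs_add_le (p * (p - 1) * u ^ (p - 2) * f u)
    (2 * p * u ^ (p - 1) * deriv f u)]

theorem abs_mul_deriv_le_of_iteratedDeriv_one {A₀ C₁ : ℝ} (hf : DifferentiableAt ℝ f u)
    (hu : u ≠ 0) (hf₀ : |f u| ≤ A₀)
    (hC₁ : |iteratedDeriv 1 (fun u => u ^ (1 : ℝ) * f u) u| ≤ C₁) :
    |u * deriv f u| ≤ C₁ + A₀ := by
  rw [iteratedDeriv_one, (hasDerivAt_rpow_mul hf hu).deriv, rpowMulDeriv] at hC₁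
  norm_num at hC₁
  calc |u * deriv f u| = |(f u + u * deriv f u) - f u| := by ring_nf
    _ ≤ |f u + u * deriv f u| + |f u| := abs_sub _ _
    _ ≤ C₁ + A₀ := add_le_add hC₁ hf₀

theorem abs_sq_mul_deriv_deriv_le_of_iteratedDeriv_two {A₀ B₁ C₂ : ℝ} (hf : ContDiff ℝ 2 f)
    (hu : u ≠ 0) (hf₀ : |f u| ≤ A₀) (hf₁ : |u * deriv f u| ≤ B₁)
    (hC₂ : |iteratedDeriv 2 (fun u => u ^ (2 : ℝ) * f u) u| ≤ C₂) :
    |u ^ 2 * deriv (deriv f) u| ≤ C₂ + 2 * A₀ + 4 * B₁ := by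
  rw [iteratedDeriv_two_rpow_mul hf hu, rpowMulDeriv2] at hC₂
  norm_num at hC₂
  calc |u ^ 2 * deriv (deriv f) u|
      = |(2 * f u + 4 * u * deriv f u + u ^ 2 * deriv (deriv f) u) - 2 * f u
          - 4 * (u * deriv f u)| := by ring_nf
    _ ≤ |2 * f u + 4 * u * deriv f u + u ^ 2 * deriv (deriv f) u| + 2 * |f u|
          + 4 * |u * deriv f u| := by
        refine (abs_sub _ _).trans (add_le_add ((abs_sub _ _).trans ?_) ?_) <;>
          simp [abs_mul]
    _ ≤ C₂ + 2 * A₀ + 4 * B₁ := by gcongr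

theorem exists_abs_taylor_two_rpow_mul_le (hf_nonneg : ∀ x, 0 ≤ f x) (hf : ContDiff ℝ 2 f)
    (hf_bd : ∀ k, k ≤ 2 → ∃ C : ℝ, ∀ x : ℝ, |iteratedDeriv k f x| ≤ C)
    (hhp_bd : ∀ p ∈ Icc (0 : ℝ) 2, ∀ k, k ≤ 2 →
      ∃ C : ℝ, ∀ e : ℝ, |iteratedDeriv k (fun u : ℝ => u ^ p * f u) e| ≤ C) :
    ∃ M, 0 ≤ M ∧ ∀ p ∈ Icc (0 : ℝ) 2, ∀ e t,
      |(e + t) ^ p * f (e + t) - e ^ p * f e - t * rpowMulDeriv f p e| ≤ M * t ^ 2 := by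
  obtain ⟨A₀, hA₀⟩ := hf_bd 0 (by norm_num)
  obtain ⟨A₂, hA₂⟩ := hf_bd 2 le_rfl
  obtain ⟨C, hC⟩ := hhp_bd (1 / 2) ⟨by norm_num, by norm_num⟩ 2 le_rfl
  obtain ⟨C₁, hC₁⟩ := hhp_bd 1 ⟨zero_le_one, one_le_two⟩ 1 (by norm_num)
  obtain ⟨C₂, hC₂⟩ := hhp_bd 2 ⟨zero_le_two, le_rfl⟩ 2 le_rfl
  simp only [iteratedDeriv_succ, iteratedDeriv_zero] at hA₀ hA₂
  have hf0 : f 0 = 0 := apply_zero_eq_zero_of_abs_iteratedDeriv_two_sqrt_mul_le hf hC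
  have hf'0 : deriv f 0 = 0 :=
    IsLocalMin.deriv_eq_zero (Eventually.of_forall fun x => hf0.trans_le (hf_nonneg x))
  have hf₀ := abs_le_mul_rpow_two_of_apply_zero_of_deriv_zero hf hA₂ hf0 hf'0
  have hf₁ := abs_deriv_le_mul_abs_of_deriv_zero hf hA₂ hf'0
  have hbound : ∀ p ∈ Icc (0 : ℝ) 2, ∀ u, |rpowMulDeriv2 f p u|
      ≤ max (7 * A₂) (2 * A₀ + 4 * (C₁ + A₀) + (C₂ + 2 * A₀ + 4 * (C₁ + A₀))) := by
    intro p hp u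
    rcases le_total |u| 1 with hu | hu
    · refine le_max_of_le_left ((abs_rpowMulDeriv2_le hf₀ hf₁ hA₂ hp u).trans ?_)
      have hA₂' : 0 ≤ A₂ := (abs_nonneg _).trans (hA₂ 0)
      have : |u| ^ p ≤ 1 := rpow_le_one (abs_nonneg u) hu hp.1
      nlinarith
    · have hu₀ : u ≠ 0 := abs_pos.mp (one_pos.trans_le hu)
      have hB₁ := abs_mul_deriv_le_of_iteratedDeriv_one (hf.differentiable two_ne_zero u) hu₀
        (hA₀ u) (hC₁ u)
      exact le_max_of_le_right (abs_rpowMulDeriv2_le_of_one_le_abs hp hu (hA₀ u) hB₁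
        (abs_sq_mul_deriv_deriv_le_of_iteratedDeriv_two hf hu₀ (hA₀ u) hB₁ (hC₂ u)))
  refine ⟨_, (abs_nonneg _).trans (hbound 0 ⟨le_rfl, zero_le_two⟩ 0), fun p hp e t => ?_⟩
  exact abs_taylor_two_le (hasDerivAt_rpow_mul_of_abs_le hf hf₀ hf₁ hp)
    (hasDerivAt_rpowMulDeriv_of_abs_le hf hf₀ hf₁ hA₂ hp) (hbound p hp) e t

end RpowMul

theorem HasCompactSupport.iteratedDeriv {K : ℝ → ℝ} (hK : HasCompactSupport K) (n : ℕ) :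
    HasCompactSupport (iteratedDeriv n K) := by
  induction n with
  | zero => simpa using hK
  | succ n ih => rw [iteratedDeriv_succ]; exact ih.deriv

theorem integral_comp_sub_div_mul {K h : ℝ → ℝ} {b : ℝ} (hb : 0 < b) (e : ℝ) :
    ∫ u, K ((u - e) / b) * h u = b * ∫ v, K v * h (e + b * v) := by
  have hrw : ∀ u, K ((u - e) / b) * h u = K ((u - e) / b) * h (e + b * ((u - e) / b)) := by
    intro u; congr 2; field_simp; ring
  simp_rw [hrw]
  rw [integral_sub_right_eq_self (fun u => K (u / b) * h (e + b * (u / b))) e,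
    Measure.integral_comp_div (fun v => K v * h (e + b * v)) b, abs_of_pos hb, smul_eq_mul]

theorem abs_integral_kernel_mul_le {K h : ℝ → ℝ} {M c e b : ℝ} (hK : Continuous K)
    (hKs : HasCompactSupport K) (hK₀ : ∫ v, K v = 0) (hK₁ : ∫ v, v * K v = 0)
    (hh : Continuous h) (htaylor : ∀ t, |h (e + t) - h e - t * c| ≤ M * t ^ 2) (hb : 0 < b) :
    |∫ u, K ((u - e) / b) * h u| ≤ M * (∫ v, v ^ 2 * |K v|) * b ^ 3 := by
  set R : ℝ → ℝ := fun v => h (e + b * v) - h e - b * v * c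
  have hR : Continuous R := by fun_prop
  have hKint : Integrable K := hK.integrable_of_hasCompactSupport hKs
  have hint : ∀ {g : ℝ → ℝ}, Continuous g → Integrable fun v => g v * K v := fun hg =>
    (hg.mul hK).integrable_of_hasCompactSupport hKs.mul_left
  have hsplit : ∫ v, K v * h (e + b * v) = ∫ v, R v * K v := by
    have hexpand : ∀ v, K v * h (e + b * v) = R v * K v + (h e * K v + b * c * (v * K v)) :=
      fun v => by simp only [R]; ring
    have hlin : Integrable fun v => h e * K v + b * c * (v * K v) :=
      (hKint.const_mul _).add ((hint continuous_id').const_mul _)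
    simp_rw [hexpand]
    rw [integral_add (hint hR) hlin, integral_add (hKint.const_mul _)
      ((hint continuous_id').const_mul _), integral_const_mul, integral_const_mul, hK₀, hK₁]
    ring
  have hbound : ‖∫ v, R v * K v‖ ≤ ∫ v, M * b ^ 2 * (v ^ 2 * |K v|) := by
    refine norm_integral_le_of_norm_le
      ((continuous_const.mul ((continuous_pow 2).mul hK.abs)).integrable_of_hasCompactSupport
        hKs.abs.mul_left.mul_left) (Eventually.of_forall fun v => ?_)
    calc ‖R v * K v‖ = |R v| * |K v| := by rw [Real.norm_eq_abs, abs_mul]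
      _ ≤ M * (b * v) ^ 2 * |K v| := by gcongr; exact htaylor (b * v)
      _ = M * b ^ 2 * (v ^ 2 * |K v|) := by ring
  rw [integral_comp_sub_div_mul hb, hsplit, abs_mul, abs_of_pos hb]
  calc b * |∫ v, R v * K v| ≤ b * ∫ v, M * b ^ 2 * (v ^ 2 * |K v|) := by gcongr; exact hbound
    _ = M * (∫ v, v ^ 2 * |K v|) * b ^ 3 := by rw [integral_const_mul]; ring

theorem lemma4_higher_derivative_bounds_general
    (f K1 : ℝ → ℝ)
    -- f is a probability density function on ℝ
    (hf_nonneg : ∀ x, 0 ≤ f x)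
    -- f has bounded continuous second-order derivatives
    (hf_C2 : ContDiff ℝ 2 f)
    (hf_bd : ∀ k, k ≤ 2 → ∃ C : ℝ, ∀ x : ℝ, |iteratedDeriv k f x| ≤ C)
    -- the functions h_p(e) = e^p f(e) have bounded derivatives up to order 2
    (hhp_bd : ∀ p ∈ Set.Icc (0:ℝ) 2, ∀ k, k ≤ 2 →
      ∃ C : ℝ, ∀ e : ℝ, |iteratedDeriv k (fun u : ℝ => u ^ p * f u) e| ≤ C)
    -- K1 is a symmetric, compactly supported, C³ kernel
    (hK1_supp : HasCompactSupport K1)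
    (hK1_C3 : ContDiff ℝ 3 K1)
    (hK1_deriv_int : ∀ ℓ ∈ ({1,2,3} : Set ℕ), ∫ v, iteratedDeriv ℓ K1 v = 0)
    (hK1_vderiv_int : ∀ ℓ ∈ ({2,3} : Set ℕ), ∫ v, v * iteratedDeriv ℓ K1 v = 0) :
    ∃ C > (0:ℝ), ∀ (e p b1 : ℝ), p ∈ Set.Icc (0:ℝ) 2 → 0 < b1 →
      ∀ ℓ ∈ ({2,3} : Set ℕ),
      |∫ u, iteratedDeriv ℓ K1 ((u - e) / b1) * (u ^ p * f u)| ≤ C * b1^3 := by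
  obtain ⟨M, hM, htaylor⟩ := exists_abs_taylor_two_rpow_mul_le hf_nonneg hf_C2 hf_bd hhp_bd
  set J : ℕ → ℝ := fun ℓ => ∫ v, v ^ 2 * |iteratedDeriv ℓ K1 v|
  have hJ : ∀ ℓ, 0 ≤ J ℓ := fun ℓ => integral_nonneg fun v => by positivity
  refine ⟨M * (J 2 + J 3) + 1, by positivity, fun e p b hp hb ℓ hℓ => ?_⟩
  have hℓ' : ℓ = 2 ∨ ℓ = 3 := hℓ
  have hJℓ : J ℓ ≤ J 2 + J 3 := by
    rcases hℓ' with rfl | rfl <;> linarith [hJ 2, hJ 3]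
  have hK : Continuous (iteratedDeriv ℓ K1) :=
    hK1_C3.continuous_iteratedDeriv ℓ (by rcases hℓ' with rfl | rfl <;> norm_num)
  have hh : Continuous fun u : ℝ => u ^ p * f u :=
    (continuous_rpow_const hp.1).mul hf_C2.continuous
  calc |∫ u, iteratedDeriv ℓ K1 ((u - e) / b) * (u ^ p * f u)| ≤ M * J ℓ * b ^ 3 :=
        abs_integral_kernel_mul_le hK (hK1_supp.iteratedDeriv ℓ)
          (hK1_deriv_int ℓ (by rcases hℓ' with rfl | rfl <;> simp)) (hK1_vderiv_int ℓ hℓ) hh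
          (htaylor p hp e) hb
    _ ≤ (M * (J 2 + J 3) + 1) * b ^ 3 := by gcongr; nlinarith

/-- Lemma 4, second- and third-derivative bounds: there exists `C > 0`
such that for every `e ∈ ℝ`, every `p ∈ [0,2]`, every `b1 > 0` and every `ℓ ∈ {2,3}`,
`|∫ K1^{(ℓ)}((u - e)/b1) u^p f(u) du| ≤ C b1³`. -/
theorem lemma4_higher_derivative_bounds
    (f K1 : ℝ → ℝ)
    -- f is a probability density function on ℝ
    (hf_nonneg : ∀ x, 0 ≤ f x)
    (hf_int : ∫ x, f x = 1)
    -- f has bounded continuous second-order derivatives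
    (hf_C2 : ContDiff ℝ 2 f)
    (hf_bd : ∀ k, k ≤ 2 → ∃ C : ℝ, ∀ x : ℝ, |iteratedDeriv k f x| ≤ C)
    -- the functions h_p(e) = e^p f(e) have bounded derivatives up to order 2
    (hhp_bd : ∀ p ∈ Set.Icc (0:ℝ) 2, ∀ k, k ≤ 2 →
      ∃ C : ℝ, ∀ e : ℝ, |iteratedDeriv k (fun u : ℝ => u ^ p * f u) e| ≤ C)
    -- K1 is a symmetric, compactly supported, C³ kernel
    (hK1_symm : ∀ v, K1 (-v) = K1 v)
    (hK1_supp : HasCompactSupport K1)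
    (hK1_C3 : ContDiff ℝ 3 K1)
    (hK1_int : ∫ v, K1 v = 1)
    (hK1_deriv_int : ∀ ℓ ∈ ({1,2,3} : Set ℕ), ∫ v, iteratedDeriv ℓ K1 v = 0)
    (hK1_vderiv_int : ∀ ℓ ∈ ({2,3} : Set ℕ), ∫ v, v * iteratedDeriv ℓ K1 v = 0) :
    ∃ C > (0:ℝ), ∀ (e p b1 : ℝ), p ∈ Set.Icc (0:ℝ) 2 → 0 < b1 →
      ∀ ℓ ∈ ({2,3} : Set ℕ),
      |∫ u, iteratedDeriv ℓ K1 ((u - e) / b1) * (u ^ p * f u)| ≤ C * b1^3 :=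
  lemma4_higher_derivative_bounds_general f K1 hf_nonneg hf_C2 hf_bd hhp_bd hK1_supp hK1_C3
    hK1_deriv_int hK1_vderiv_int
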